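/- arXiv:2205.04953 — 2 statements merged into one kernel-verified Lean document; each statement's English description precedes it below -/
import Mathlib

section
/- For every finite graph G, χ_f(G)·α(G) ≥ |V(G)|, where α(G) is the independence number and χ_f(G) the fractional chromatic number. Moreover, equality holds if G is vertex-transitive. -/
open SimpleGraph

/-- The strong product of two simple graphs. -/
def strongProd {α β : Type*} (G : SimpleGraph α) (H : SimpleGraph β) :
    SimpleGraph (α × β) where
  Adj x y := x ≠ y ∧ (x.1 = y.1 ∨ G.Adj x.1 y.1) ∧ (x.2 = y.2 ∨ H.Adj x.2 y.2)
  symm := ⟨fun x y => by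
    rintro ⟨h1, h2, h3⟩
    exact ⟨h1.symm, h2.imp Eq.symm (fun h => h.symm), h3.imp Eq.symm (fun h => h.symm)⟩⟩
  loopless := ⟨fun x => by simp⟩

/-- The strong product of a family of simple graphs. -/
def strongProdPi {d : ℕ} {V : Fin d → Type*} (G : ∀ i, SimpleGraph (V i)) :
    SimpleGraph (∀ i, V i) where
  Adj x y := x ≠ y ∧ ∀ i, x i = y i ∨ (G i).Adj (x i) (y i)
  symm := ⟨fun x y => fun ⟨h1, h2⟩ => ⟨h1.symm, fun i => (h2 i).imp Eq.symm (fun h => h.symm)⟩⟩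
  loopless := ⟨fun x => by simp⟩

/-- Every connected component of the subgraph of `G` induced on `S` has at most `c`
vertices. -/
def ClusterBound {α : Type*} (G : SimpleGraph α) (S : Set α) (c : ℕ) : Prop :=
  ∀ v : S, ((G.induce S).connectedComponentMk v).supp.ncard ≤ c

/-- `G` has a `k`-colouring with clustering `c`. -/
def HasClusteredColoring {α : Type*} (G : SimpleGraph α) (k c : ℕ) : Prop :=
  ∃ f : α → Fin k, ∀ i : Fin k, ClusterBound G {v | f v = i} c

/-- `f` is a `(p:q)`-colouring: each vertex gets a `q`-element subset of `Fin p`. -/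
def IsPQColoring {α : Type*} (p q : ℕ) (f : α → Finset (Fin p)) : Prop :=
  ∀ v, (f v).card = q

/-- `f` is a proper `(p:q)`-colouring of `G`. -/
def IsProperPQColoring {α : Type*} (G : SimpleGraph α) (p q : ℕ)
    (f : α → Finset (Fin p)) : Prop :=
  IsPQColoring p q f ∧ ∀ ⦃x y⦄, G.Adj x y → Disjoint (f x) (f y)

/-- The set-colouring `f` has clustering `c`: for each colour, each monochromatic
component has at most `c` vertices. -/
def PQClusterBound {α : Type*} (G : SimpleGraph α) {p : ℕ}
    (f : α → Finset (Fin p)) (c : ℕ) : Prop :=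
  ∀ i : Fin p, ClusterBound G {v | i ∈ f v} c

/-- `G` has a `(p:q)`-colouring with clustering `c`. -/
def HasPQClusteredColoring {α : Type*} (G : SimpleGraph α) (p q c : ℕ) : Prop :=
  ∃ f : α → Finset (Fin p), IsPQColoring p q f ∧ PQClusterBound G f c

/-- `ord` is a consistent `(p:q)`-colouring of `G` (each vertex's `q` colours are ordered,
with the `i`-th colour of `x` different from the `j`-th colour of `y` for every edge `xy`
and all distinct `i, j`). -/
def IsConsistentPQColoring {α : Type*} (G : SimpleGraph α) (p q : ℕ)
    (ord : α → Fin q → Fin p) : Prop :=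
  (∀ v, Function.Injective (ord v)) ∧
    ∀ ⦃x y⦄, G.Adj x y → ∀ i j : Fin q, i ≠ j → ord x i ≠ ord y j

/-- The colour set of a vertex in an ordered colouring. -/
def ordColors {α : Type*} {p q : ℕ} (ord : α → Fin q → Fin p) (v : α) : Finset (Fin p) :=
  Finset.image (ord v) Finset.univ

/-- `G` has a consistent `(p:q)`-colouring with clustering `c`. -/
def HasConsistentClusteredColoring {α : Type*} (G : SimpleGraph α) (p q c : ℕ) : Prop :=
  ∃ ord : α → Fin q → Fin p, IsConsistentPQColoring G p q ord ∧
    PQClusterBound G (ordColors ord) c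

/-- The fractional chromatic number of `G`: the infimum of `p/q` over proper
`(p:q)`-colourings of `G`. -/
noncomputable def fracChrom {α : Type*} (G : SimpleGraph α) : ℝ :=
  sInf {t : ℝ | ∃ p q : ℕ, 0 < q ∧
    (∃ f : α → Finset (Fin p), IsProperPQColoring G p q f) ∧ t = (p : ℝ) / q}

/-- The independence number of `G`. -/
noncomputable def indepNum {α : Type*} (G : SimpleGraph α) : ℕ :=
  sSup {n | ∃ s : Finset α, (∀ x ∈ s, ∀ y ∈ s, ¬ G.Adj x y) ∧ s.card = n}

/-!
Each colour class of a proper `(p:q)`-colouring is independent, so double counting the pairs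
(vertex, colour) gives `q * |V| ≤ p * α(G)`, i.e. `|V| / α(G) ≤ χ_f(G)`.

Conversely, let a group `Γ` act transitively on `V` by automorphisms and let `A` be a maximum
independent set. Colouring `v` by `{g ∈ Γ | g⁻¹ • v ∈ A}` is proper, every vertex receives the
same number `q` of colours by transitivity, and double counting gives `|V| * q = |Γ| * α(G)`.
Hence `χ_f(G) ≤ |Γ| / q = |V| / α(G)`.
-/

open Finset

theorem sum_card_filter_comm {α β : Type*} [Fintype α] [Fintype β] (r : α → β → Prop)
    [∀ a b, Decidable (r a b)] : ∑ a, #{b | r a b} = ∑ b, #{a | r a b} :=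
  sum_card_bipartiteAbove_eq_sum_card_bipartiteBelow r

section TransitiveAction

open MulAction

variable {Γ α : Type*} [Group Γ] [Fintype Γ] [MulAction Γ α] [IsPretransitive Γ α]

theorem card_filter_inv_smul_mem_eq [DecidableEq α] (A : Finset α) (v w : α) :
    #{g : Γ | g⁻¹ • v ∈ A} = #{g : Γ | g⁻¹ • w ∈ A} := by
  obtain ⟨h, rfl⟩ := exists_smul_eq Γ v w
  exact card_equiv (Equiv.mulLeft h) fun g => by simp [mul_smul]

theorem card_mul_card_filter_inv_smul_mem [Fintype α] [DecidableEq α] (A : Finset α) (v : α) :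
    Fintype.card α * #{g : Γ | g⁻¹ • v ∈ A} = Fintype.card Γ * #A :=
  calc Fintype.card α * #{g : Γ | g⁻¹ • v ∈ A} = ∑ w, #{g : Γ | g⁻¹ • w ∈ A} := by
        simp [card_filter_inv_smul_mem_eq A _ v]
    _ = ∑ g : Γ, #{w | g⁻¹ • w ∈ A} := sum_card_filter_comm fun w (g : Γ) => g⁻¹ • w ∈ A
    _ = ∑ _g : Γ, #A := sum_congr rfl fun g _ => card_equiv (toPerm g⁻¹) fun w => by simp
    _ = Fintype.card Γ * #A := by simp

end TransitiveAction

namespace SimpleGraph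

variable {α : Type*} [Fintype α] (G : SimpleGraph α)

theorem indepNum_le_card : G.indepNum ≤ Fintype.card α := by
  obtain ⟨s, hs⟩ := G.exists_isNIndepSet_indepNum
  exact hs.card_eq ▸ s.card_le_univ

theorem indepNum_pos [Nonempty α] : 0 < G.indepNum := by
  obtain ⟨v⟩ := ‹Nonempty α›
  have := (G.isIndepSet_iff.2 (coe_singleton v ▸ Set.pairwise_singleton v _)).card_le_indepNum
  exact (by simpa using this : 1 ≤ G.indepNum)

end SimpleGraph

section FractionalChromaticNumber

variable {α : Type*} (G : SimpleGraph α)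

theorem indepNum_eq_simpleGraph_indepNum : _root_.indepNum G = G.indepNum := by
  unfold _root_.indepNum SimpleGraph.indepNum
  congr 1
  ext n
  refine exists_congr fun s => ?_
  rw [isNIndepSet_iff, isIndepSet_iff]
  refine and_congr_left' ⟨fun h x hx y hy _ => h x hx y hy, fun h x hx y hy => ?_⟩
  obtain rfl | hxy := eq_or_ne x y
  · exact G.irrefl
  · exact h hx hy hxy

theorem isProperPQColoring_singleton_equivFin [Fintype α] :
    IsProperPQColoring G (Fintype.card α) 1 fun v => {Fintype.equivFin α v} :=
  ⟨fun _ => card_singleton _, fun _ _ hxy =>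
    disjoint_singleton.2 ((Fintype.equivFin α).injective.ne hxy.ne)⟩

theorem IsProperPQColoring.mul_card_le_mul_indepNum [Fintype α] {p q : ℕ}
    {f : α → Finset (Fin p)} (hf : IsProperPQColoring G p q f) :
    q * Fintype.card α ≤ p * G.indepNum := by
  classical
  have hclass (i : Fin p) : #{v | i ∈ f v} ≤ G.indepNum := by
    refine IsIndepSet.card_le_indepNum fun x hx y hy _ hxy => ?_
    exact disjoint_left.1 (hf.2 hxy) (by simpa using hx) (by simpa using hy)
  have hcard : ∀ v, #(f v) = q := hf.1
  calc q * Fintype.card α = ∑ v, #(f v) := by simp [hcard, mul_comm]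
    _ = ∑ i, #{v | i ∈ f v} := by
      simpa only [filter_univ_mem] using sum_card_filter_comm fun v i => i ∈ f v
    _ ≤ ∑ _i : Fin p, G.indepNum := sum_le_sum fun i _ => hclass i
    _ = p * G.indepNum := by simp

theorem fracChrom_nonneg : 0 ≤ fracChrom G :=
  Real.sInf_nonneg <| by rintro t ⟨p, q, -, -, rfl⟩; positivity

theorem fracChrom_le_div {p q : ℕ} (hq : 0 < q) {f : α → Finset (Fin p)}
    (hf : IsProperPQColoring G p q f) : fracChrom G ≤ p / q :=
  csInf_le ⟨0, by rintro t ⟨p, q, -, -, rfl⟩; positivity⟩ ⟨p, q, hq, ⟨f, hf⟩, rfl⟩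

variable [Fintype α]

theorem card_div_indepNum_le_fracChrom [Nonempty α] :
    (Fintype.card α : ℝ) / G.indepNum ≤ fracChrom G := by
  refine le_csInf ⟨_, _, _, one_pos, ⟨_, isProperPQColoring_singleton_equivFin G⟩, rfl⟩ ?_
  rintro t ⟨p, q, hq, ⟨f, hf⟩, rfl⟩
  rw [div_le_div_iff₀ (by exact_mod_cast G.indepNum_pos) (by exact_mod_cast hq)]
  exact_mod_cast (hf.mul_card_le_mul_indepNum G).trans_eq' (mul_comm _ _)

theorem card_le_fracChrom_mul_indepNum : (Fintype.card α : ℝ) ≤ fracChrom G * G.indepNum := by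
  cases isEmpty_or_nonempty α
  · simpa using mul_nonneg (fracChrom_nonneg G) (Nat.cast_nonneg G.indepNum)
  · exact (div_le_iff₀ (by exact_mod_cast G.indepNum_pos)).1 (card_div_indepNum_le_fracChrom G)

end FractionalChromaticNumber

section VertexTransitive

open MulAction

variable {Γ α : Type*} [Group Γ] [Fintype Γ] [MulAction Γ α] [IsPretransitive Γ α] [Fintype α]
  (G : SimpleGraph α)

theorem exists_isProperPQColoring_of_isPretransitive [Nonempty α]
    (hΓ : ∀ (g : Γ) ⦃x y⦄, G.Adj x y → G.Adj (g • x) (g • y)) :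
    ∃ q, Fintype.card α * q = Fintype.card Γ * G.indepNum ∧
      ∃ f : α → Finset (Fin (Fintype.card Γ)), IsProperPQColoring G _ q f := by
  classical
  obtain ⟨A, hA⟩ := G.exists_isNIndepSet_indepNum
  obtain ⟨v⟩ := ‹Nonempty α›
  let colors (w : α) : Finset Γ := {g | g⁻¹ • w ∈ A}
  refine ⟨#(colors v), hA.card_eq ▸ card_mul_card_filter_inv_smul_mem A v,
    fun w => (colors w).map (Fintype.equivFin Γ).toEmbedding,
    fun w => by rw [card_map, card_filter_inv_smul_mem_eq A w v], fun x y hxy => ?_⟩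
  rw [disjoint_map, Finset.disjoint_left]
  intro g hx hy
  simp only [colors, mem_filter, mem_univ, true_and] at hx hy
  exact hA.isIndepSet hx hy (hΓ g⁻¹ hxy).ne (hΓ g⁻¹ hxy)

theorem fracChrom_mul_indepNum_le_card_of_isPretransitive
    (hΓ : ∀ (g : Γ) ⦃x y⦄, G.Adj x y → G.Adj (g • x) (g • y)) :
    fracChrom G * G.indepNum ≤ Fintype.card α := by
  cases isEmpty_or_nonempty α
  · simp [Nat.le_zero.1 (G.indepNum_le_card.trans_eq Fintype.card_eq_zero)]
  obtain ⟨q, hq, f, hf⟩ := exists_isProperPQColoring_of_isPretransitive G hΓ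
  have hq0 : 0 < q :=
    Nat.pos_of_mul_pos_left (hq ▸ Nat.mul_pos Fintype.card_pos G.indepNum_pos)
  have hqR : (Fintype.card α : ℝ) * q = Fintype.card Γ * G.indepNum := by exact_mod_cast hq
  calc fracChrom G * G.indepNum ≤ Fintype.card Γ / q * G.indepNum :=
        mul_le_mul_of_nonneg_right (fracChrom_le_div G hq0 hf) (Nat.cast_nonneg _)
    _ = Fintype.card α := by
      rw [div_mul_eq_mul_div, ← hqR, mul_div_cancel_right₀ _ (by positivity)]

end VertexTransitive

theorem stmt5 {α : Type*} [Fintype α] (G : SimpleGraph α) :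
    (Fintype.card α : ℝ) ≤ fracChrom G * _root_.indepNum G ∧
      ((∀ u v : α, ∃ e : G ≃g G, e u = v) →
        fracChrom G * _root_.indepNum G = Fintype.card α) := by
  rw [indepNum_eq_simpleGraph_indepNum]
  refine ⟨card_le_fracChrom_mul_indepNum G, fun hG => ?_⟩
  have : Finite (G ≃g G) := Finite.of_injective _ RelIso.toEquiv_injective
  have : Fintype (G ≃g G) := Fintype.ofFinite _
  have : MulAction.IsPretransitive (G ≃g G) α := ⟨hG⟩
  exact le_antisymm
    (fracChrom_mul_indepNum_le_card_of_isPretransitive G fun (e : G ≃g G) _ _ => e.map_adj_iff.2)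
    (card_le_fracChrom_mul_indepNum G)
end

section
/- If a graph G has a consistent (p:q)-colouring with clustering c₁ and a graph H has a (q:r)-colouring with clustering c₂, then G ⊠ H has a (p:r)-colouring with clustering c₁·c₂. -/
open SimpleGraph

/-!
Write `α_x^j = ord x j` and colour `(x, y)` by `{α_x^j | j ∈ g y}`. In a monochromatic component
of colour `α_x^j` the index `j` cannot change along an edge: across an edge of `G` by
consistency, and with the `G`-coordinate fixed by injectivity of `ord x`. Hence the component
lies in `A × B` with `A = {a | α_a^j = α_x^j}` and `B = {b | j ∈ g b}`, and is the product of
the component of `x` in `G[A]` and a monochromatic component of `H`. By consistency again the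
component of `x` in `G[A]` is a monochromatic component of `G`. These are equalities of vertex
sets, not just inclusions, which matters because `Set.ncard` is `0` on infinite sets.
-/

namespace SimpleGraph

variable {α β : Type*}

def inducedComponent (G : SimpleGraph α) (S : Set α) (v : S) : Set α :=
  Subtype.val '' ((G.induce S).connectedComponentMk v).supp

variable {G : SimpleGraph α} {H : SimpleGraph β}

theorem mem_inducedComponent {S : Set α} {v : S} {w : α} :
    w ∈ G.inducedComponent S v ↔ ∃ hw : w ∈ S, (G.induce S).Reachable v ⟨w, hw⟩ := by
  simp only [inducedComponent, Set.mem_image, ConnectedComponent.mem_supp_iff,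
    ConnectedComponent.eq, Subtype.exists, exists_and_right, exists_eq_right, reachable_comm]

theorem clusterBound_iff {S : Set α} {c : ℕ} :
    ClusterBound G S c ↔ ∀ v : S, (G.inducedComponent S v).ncard ≤ c := by
  simp only [ClusterBound, inducedComponent, Set.ncard_image_of_injective _ Subtype.val_injective]

theorem inducedComponent_eq_of_adj_closed {S T : Set α} (hTS : T ⊆ S)
    (hT : ∀ a ∈ T, ∀ b ∈ S, G.Adj a b → b ∈ T) (v : T) :
    G.inducedComponent S (Set.inclusion hTS v) = G.inducedComponent T v := by
  ext w
  simp only [mem_inducedComponent]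
  constructor
  · rintro ⟨hw, hvw⟩
    suffices ∀ u : S, Relation.ReflTransGen (G.induce S).Adj (Set.inclusion hTS v) u →
        ∃ hu : u.1 ∈ T, (G.induce T).Reachable v ⟨u, hu⟩ from
      this _ (reachable_iff_reflTransGen _ _ |>.mp hvw)
    intro u hvu
    induction hvu with
    | refl => exact ⟨v.2, .rfl⟩
    | tail _ hbc ih =>
      obtain ⟨hb, h⟩ := ih
      exact ⟨hT _ hb _ (Subtype.property _) hbc,
        h.trans (Adj.reachable (G := G.induce T) hbc)⟩
  · rintro ⟨hw, hvw⟩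
    exact ⟨hTS hw, hvw.map (G.induceHomOfLE hTS).toHom⟩

theorem Reachable.map_of_adj_imp {W : Type*} {G' : SimpleGraph W} (f : α → W)
    (hf : ∀ a b, G.Adj a b → f a = f b ∨ G'.Adj (f a) (f b)) {u v : α} (h : G.Reachable u v) :
    G'.Reachable (f u) (f v) := by
  rw [reachable_iff_reflTransGen] at h ⊢
  refine Relation.ReflTransGen.lift' f (fun a b hab => ?_) _ _ h
  change Relation.ReflTransGen G'.Adj (f a) (f b)
  rcases hf a b hab with heq | hadj
  · exact heq ▸ .refl
  · exact .single hadj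

theorem inducedComponent_strongProd (A : Set α) (B : Set β) (x : A) (y : B) :
    (strongProd G H).inducedComponent (A ×ˢ B) ⟨(x, y), x.2, y.2⟩ =
      G.inducedComponent A x ×ˢ H.inducedComponent B y := by
  ext ⟨a, b⟩
  simp only [Set.mem_prod, mem_inducedComponent]
  constructor
  · rintro ⟨⟨ha, hb⟩, h⟩
    refine ⟨⟨ha, h.map_of_adj_imp (fun w : ↥(A ×ˢ B) => (⟨w.1.1, w.2.1⟩ : A)) ?_⟩,
      ⟨hb, h.map_of_adj_imp (fun w : ↥(A ×ˢ B) => (⟨w.1.2, w.2.2⟩ : B)) ?_⟩⟩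
    · rintro u w ⟨-, hG, -⟩
      simpa [Subtype.ext_iff] using hG
    · rintro u w ⟨-, -, hH⟩
      simpa [Subtype.ext_iff] using hH
  · rintro ⟨⟨ha, hxa⟩, ⟨hb, hyb⟩⟩
    refine ⟨⟨ha, hb⟩, .trans (v := ⟨(a, y), ha, y.2⟩) ?_ ?_⟩
    · refine hxa.map_of_adj_imp (fun a' : A => (⟨(a', y), a'.2, y.2⟩ : ↥(A ×ˢ B))) ?_
      intro a₁ a₂ hadj
      exact .inr ⟨fun h => hadj.ne (Subtype.ext (congrArg Prod.fst h)), .inr hadj, .inl rfl⟩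
    · refine hyb.map_of_adj_imp (fun b' : B => (⟨(a, b'), ha, b'.2⟩ : ↥(A ×ˢ B))) ?_
      intro b₁ b₂ hadj
      exact .inr ⟨fun h => hadj.ne (Subtype.ext (congrArg Prod.snd h)), .inl rfl, .inr hadj⟩

end SimpleGraph

section ProductColoring

variable {α β : Type*} {G : SimpleGraph α} {H : SimpleGraph β} {p q r : ℕ}
  {ord : α → Fin q → Fin p}

def prodColoring (ord : α → Fin q → Fin p) (g : β → Finset (Fin q)) (w : α × β) :
    Finset (Fin p) :=
  (g w.2).image (ord w.1)

theorem IsConsistentPQColoring.index_eq (hord : IsConsistentPQColoring G p q ord) {a a' : α}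
    (haa' : a = a' ∨ G.Adj a a') {j j' : Fin q} (h : ord a j = ord a' j') : j = j' := by
  rcases haa' with rfl | hadj
  · exact hord.1 a h
  · by_contra hne
    exact hord.2 hadj j j' hne h

theorem IsConsistentPQColoring.isPQColoring_prodColoring
    (hord : IsConsistentPQColoring G p q ord) {g : β → Finset (Fin q)} (hg : IsPQColoring q r g) :
    IsPQColoring p r (prodColoring ord g) := fun w => by
  rw [prodColoring, Finset.card_image_of_injective _ (hord.1 w.1), hg]

theorem IsConsistentPQColoring.pqClusterBound_prodColoring
    (hord : IsConsistentPQColoring G p q ord) {g : β → Finset (Fin q)} {c₁ c₂ : ℕ}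
    (hGc : PQClusterBound G (ordColors ord) c₁) (hHc : PQClusterBound H g c₂) :
    PQClusterBound (strongProd G H) (prodColoring ord g) (c₁ * c₂) := by
  intro i
  rw [clusterBound_iff]
  rintro ⟨⟨x, y⟩, hxy⟩
  obtain ⟨j, hj, rfl⟩ := Finset.mem_image.mp hxy
  set A : Set α := {a | ord a j = ord x j}
  set B : Set β := {b | j ∈ g b}
  have hAG : A ⊆ {a | ord x j ∈ ordColors ord a} := fun a ha =>
    Finset.mem_image.mpr ⟨j, Finset.mem_univ _, ha⟩
  have hAB : A ×ˢ B ⊆ {w | ord x j ∈ prodColoring ord g w} := fun w hw =>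
    Finset.mem_image.mpr ⟨j, hw.2, hw.1⟩
  have hcompG : G.inducedComponent _ (Set.inclusion hAG ⟨x, rfl⟩) =
      G.inducedComponent A ⟨x, rfl⟩ := by
    refine inducedComponent_eq_of_adj_closed hAG (fun a ha b hb hab => ?_) _
    obtain ⟨j', -, hj'⟩ : ∃ j' ∈ Finset.univ, ord b j' = ord x j := Finset.mem_image.mp hb
    rwa [← hord.index_eq (.inr hab) (ha.trans hj'.symm)] at hj'
  have hcomp : (strongProd G H).inducedComponent _ (Set.inclusion hAB ⟨(x, y), rfl, hj⟩) =
      (strongProd G H).inducedComponent (A ×ˢ B) ⟨(x, y), rfl, hj⟩ := by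
    refine inducedComponent_eq_of_adj_closed hAB (fun w hw w' hw' hadj => ?_) _
    obtain ⟨j', hj'g, hj'⟩ := Finset.mem_image.mp hw'
    obtain rfl := hord.index_eq hadj.2.1 (hw.1.trans hj'.symm)
    exact ⟨hj', hj'g⟩
  calc _ = ((strongProd G H).inducedComponent (A ×ˢ B) ⟨(x, y), rfl, hj⟩).ncard :=
        congrArg _ hcomp
    _ = (G.inducedComponent A ⟨x, rfl⟩).ncard * (H.inducedComponent B ⟨y, hj⟩).ncard := by
      rw [inducedComponent_strongProd A B ⟨x, rfl⟩ ⟨y, hj⟩, Set.ncard_prod]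
    _ ≤ c₁ * c₂ := by
      rw [← hcompG]
      exact Nat.mul_le_mul (clusterBound_iff.mp (hGc _) _) (clusterBound_iff.mp (hHc j) _)

end ProductColoring

theorem stmt8 {α β : Type*} (G : SimpleGraph α) (H : SimpleGraph β) (p q r c₁ c₂ : ℕ)
    (hG : HasConsistentClusteredColoring G p q c₁)
    (hH : HasPQClusteredColoring H q r c₂) :
    HasPQClusteredColoring (strongProd G H) p r (c₁ * c₂) := by
  obtain ⟨ord, hord, hGc⟩ := hG
  obtain ⟨g, hg, hHc⟩ := hH
  exact ⟨prodColoring ord g, hord.isPQColoring_prodColoring hg,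
    hord.pqClusterBound_prodColoring hGc hHc⟩
end
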